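/- Let T > 0 and θ_1, …, θ_N > 0, and let θ̃_i > 0 be estimates with |θ_i − θ̃_i| ≤ ε′ ≤ θ_i/2 for all i. Define S_vib(θ) = k_B ∑_i [(θ_i/T)/(e^{θ_i/T} − 1) − ln(1 − e^{−θ_i/T})]. Then |S_vib(θ̃) − S_vib(θ)| ≤ k_B ∑_i (5/2)·ε′/(T(e^{θ_i/(2T)} − 1)) = (5 k_B ε′ / (2T)) · 𝒵, where 𝒵 = ∑_i (e^{θ_i/(2T)} − 1)^{−1}. -/
import Mathlib

open Real

private lemma expm1_pos' {x : ℝ} (hx : 0 < x) : 0 < Real.exp x - 1 := by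
  have h := Real.add_one_le_exp x
  linarith

private lemma exp_half_sq (x : ℝ) : Real.exp x = Real.exp (x/2) * Real.exp (x/2) := by
  rw [← Real.exp_add]; ring_nf

private lemma exp_inv_bound {t : ℝ} : Real.exp t * (1 - t) ≤ 1 := by
  have hh := Real.add_one_le_exp (-t)
  have h2 : 1 - t ≤ Real.exp (-t) := by linarith
  calc Real.exp t * (1 - t) ≤ Real.exp t * Real.exp (-t) :=
        mul_le_mul_of_nonneg_left h2 (Real.exp_pos t).le
    _ = 1 := by rw [← Real.exp_add]; simp

private lemma exp_two_lt : Real.exp (2:ℝ) < 7.4 := by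
  have h1 : Real.exp (2:ℝ) = Real.exp 1 * Real.exp 1 := by
    rw [← Real.exp_add]; norm_num
  have h2 := Real.exp_one_lt_d9
  have h3 := Real.exp_pos 1
  nlinarith

private lemma exp_twothirds_le : Real.exp ((2:ℝ)/3) ≤ 2 := by
  by_contra h
  push_neg at h
  have h1 : Real.exp ((2:ℝ)/3) * Real.exp ((2:ℝ)/3) * Real.exp ((2:ℝ)/3) = Real.exp 2 := by
    rw [← Real.exp_add, ← Real.exp_add]; norm_num
  have h2 := exp_two_lt
  have h3 := Real.exp_pos ((2:ℝ)/3)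
  nlinarith

/-- exp d ≤ 1 + d + d² for 0 ≤ d ≤ 2/3 -/
private lemma exp_quad_ub {d : ℝ} (h0 : 0 ≤ d) (h1 : d ≤ 2/3) :
    Real.exp d ≤ 1 + d + d^2 := by
  have hq : Real.exp d = Real.exp (d/4) ^ 4 := by
    have : Real.exp (d/4) ^ 4 = Real.exp (d/4 + d/4 + d/4 + d/4) := by
      rw [Real.exp_add, Real.exp_add, Real.exp_add]; ring
    rw [this]; congr 1; ring
  have hp : (0:ℝ) < 1 - d/4 := by linarith
  have h4 : Real.exp (d/4) * (1 - d/4) ≤ 1 := exp_inv_bound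
  have h40 : 0 ≤ Real.exp (d/4) * (1 - d/4) := by positivity
  have h5 : Real.exp d * (1 - d/4)^4 ≤ 1 := by
    rw [hq]
    calc Real.exp (d/4)^4 * (1-d/4)^4 = (Real.exp (d/4)*(1-d/4))^4 := by ring
      _ ≤ 1^4 := by exact pow_le_pow_left₀ h40 h4 4
      _ = 1 := one_pow 4
  have h6 : 1 ≤ (1 + d + d^2) * (1 - d/4)^4 := by
    nlinarith [sq_nonneg d, sq_nonneg (d - 2/3), mul_nonneg h0 (by linarith : (0:ℝ) ≤ 2/3 - d),
      mul_nonneg (mul_nonneg h0 h0) (by linarith : (0:ℝ) ≤ 2/3 - d),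
      mul_nonneg (mul_nonneg (mul_nonneg h0 h0) h0) (by linarith : (0:ℝ) ≤ 2/3 - d),
      mul_nonneg (mul_nonneg (mul_nonneg (mul_nonneg h0 h0) h0) h0)
        (by linarith : (0:ℝ) ≤ 2/3 - d),
      sq_nonneg (d*(d-2/3))]
  nlinarith [pow_pos hp 4, h5, h6, Real.exp_pos d]

/-- slope inequality for d ≥ 2/3 -/
private lemma lemKa {d : ℝ} (hd : 2/3 ≤ d) :
    2*(Real.exp d - 1) ≤ 3/2 * d * Real.exp d := by
  rcases le_or_gt (4/3 : ℝ) d with hc | hc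
  · have := Real.exp_pos d
    have h1 := Real.add_one_le_exp d
    nlinarith
  · have hE : Real.exp d = Real.exp (2/3) * Real.exp (d - 2/3) := by
      rw [← Real.exp_add]; congr 1; ring
    have hinv : Real.exp (d - 2/3) * (1 - (d - 2/3)) ≤ 1 := exp_inv_bound
    have he23p := (Real.exp_pos ((2:ℝ)/3)).le
    have h2 : (1 - (d - 2/3)) * Real.exp d ≤ 2 := by
      have hm : Real.exp (2/3) * (Real.exp (d - 2/3) * (1 - (d - 2/3))) ≤
          Real.exp (2/3) * 1 := mul_le_mul_of_nonneg_left hinv he23p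
      have h23 := exp_twothirds_le
      nlinarith [Real.exp_pos ((2:ℝ)/3)]
    have h4 : 0 ≤ (d - 2/3) * Real.exp d :=
      mul_nonneg (by linarith) (Real.exp_pos d).le
    nlinarith [h2, h4]

/-- base inequality: (1+d)(e^d - 1) ≤ (3/2) d (e^d + 1) for d ≥ 0 -/
private lemma lemKb {d : ℝ} (hd : 0 ≤ d) :
    (1+d)*(Real.exp d - 1) ≤ 3/2 * d * (Real.exp d + 1) := by
  rcases le_or_gt d (8/5 : ℝ) with hc | hc
  · have hq := exp_half_sq d
    have hp : (0:ℝ) < 1 - d/2 := by linarith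
    have hinv : Real.exp (d/2) * (1 - d/2) ≤ 1 := exp_inv_bound
    have h0 : 0 ≤ Real.exp (d/2) * (1 - d/2) := by positivity
    have h1 : Real.exp d * (1 - d/2)^2 ≤ 1 := by
      rw [hq]
      calc Real.exp (d/2) * Real.exp (d/2) * (1-d/2)^2
            = (Real.exp (d/2)*(1-d/2))^2 := by ring
        _ ≤ 1^2 := by exact pow_le_pow_left₀ h0 hinv 2
        _ = 1 := one_pow 2
    nlinarith [h1, hp, mul_pos hp hp, mul_nonneg hd (by linarith : (0:ℝ) ≤ 8/5 - d),
      Real.exp_pos d, mul_nonneg (mul_nonneg hd hd) (by linarith : (0:ℝ) ≤ 8/5 - d)]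
  · rcases le_or_gt (2:ℝ) d with hc2 | hc2
    · have := Real.exp_pos d
      nlinarith
    · have hle : Real.exp d ≤ Real.exp 2 := Real.exp_le_exp.mpr hc2.le
      have h2 := exp_two_lt
      have := Real.exp_pos d
      nlinarith

/-- easy variant: 1 + 2w ≤ (3/2)(e^w + 1) -/
private lemma lemK2 {w : ℝ} (hw : 0 ≤ w) : 1 + 2*w ≤ 3/2*(Real.exp w + 1) := by
  have hq := exp_half_sq w
  have h1 := Real.add_one_le_exp (w/2)
  nlinarith [sq_nonneg (w - 2/3), Real.exp_pos (w/2)]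

/-- polynomial core for small d -/
private lemma lemK_small {d s e : ℝ} (hd : 0 ≤ d) (hd2 : d ≤ 2/3) (hs : 0 ≤ s)
    (he0 : 0 ≤ e) (he1 : e ≤ d^2) :
    (1+d+2*s)*((1+d+e) - 1) ≤ 3/2*d*((1+d+e)*(1+s+s^2/4)+1) := by
  have h23 : (0:ℝ) ≤ 2/3 - d := by linarith
  rcases le_or_gt 0 (-1 + d/2 + 3/2*d*s - 2*s + 3/8*d*s^2) with hH | hH
  · have hG0 : 0 ≤ d*(2 + d/2 + 3/2*d*s - s/2 + 3/8*s^2 + 3/8*d*s^2) := by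
      apply mul_nonneg hd
      nlinarith [sq_nonneg (s - 2/3), mul_nonneg hd hs,
        mul_nonneg (mul_nonneg hd hs) hs]
    nlinarith [mul_nonneg he0 hH, hG0]
  · have hG2 : 0 ≤ d*(2 - d/2 + d^2/2 + s*(3/2*d^2 - d/2 - 1/2) +
        3/8*s^2*(1 + d + d^2)) := by
      apply mul_nonneg hd
      nlinarith [sq_nonneg (s - 10/9), mul_nonneg (mul_nonneg hd hs) hs,
        mul_nonneg (mul_nonneg (mul_nonneg hd hd) hs) hs,
        mul_nonneg hd hd, mul_nonneg hs h23,
        mul_nonneg (mul_nonneg hd hd) hs]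
    have h3 : 0 ≤ (d^2 - e) * (-(-1 + d/2 + 3/2*d*s - 2*s + 3/8*d*s^2)) :=
      mul_nonneg (by linarith) (by linarith)
    nlinarith [hG2, h3]

/-- the core inequality: (1+2w-d)(e^d-1) ≤ (3/2) d (e^w + 1) for 0 ≤ d ≤ w -/
private lemma lemK {d w : ℝ} (hd : 0 ≤ d) (hdw : d ≤ w) :
    (1 + 2*w - d) * (Real.exp d - 1) ≤ 3/2 * d * (Real.exp w + 1) := by
  have hs : 0 ≤ w - d := by linarith
  have hEw : Real.exp w = Real.exp d * Real.exp (w - d) := by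
    rw [← Real.exp_add]; congr 1; ring
  have hE1 : 1 + d ≤ Real.exp d := by have := Real.add_one_le_exp d; linarith
  have hEd := Real.exp_pos d
  rcases le_or_gt d (2/3 : ℝ) with hcase | hcase
  · -- small d case
    have hE2 : Real.exp d ≤ 1 + d + d^2 := exp_quad_ub hd hcase
    have hes : 1 + (w-d) + (w-d)^2/4 ≤ Real.exp (w-d) := by
      have hq := exp_half_sq (w-d)
      have h1 := Real.add_one_le_exp ((w-d)/2)
      nlinarith [Real.exp_pos ((w-d)/2)]
    have hW : Real.exp d * (1 + (w-d) + (w-d)^2/4) ≤ Real.exp w := by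
      rw [hEw]
      exact mul_le_mul_of_nonneg_left hes hEd.le
    have hmono : 3/2*d*(Real.exp d * (1 + (w-d) + (w-d)^2/4) + 1) ≤
        3/2*d*(Real.exp w + 1) := by
      have h32 : (0:ℝ) ≤ 3/2*d := by linarith
      nlinarith [mul_le_mul_of_nonneg_left hW h32]
    have h := lemK_small (d := d) (s := w - d) (e := Real.exp d - 1 - d)
      hd hcase hs (by linarith) (by linarith)
    calc (1 + 2*w - d) * (Real.exp d - 1)
        = (1+d+2*(w-d))*((1+d+(Real.exp d - 1 - d)) - 1) := by ring
      _ ≤ 3/2*d*((1+d+(Real.exp d - 1 - d))*(1+(w-d)+(w-d)^2/4)+1) := h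
      _ = 3/2*d*(Real.exp d * (1 + (w-d) + (w-d)^2/4) + 1) := by ring
      _ ≤ 3/2*d*(Real.exp w + 1) := hmono
  · -- large d case
    have hKa : 2*(Real.exp d - 1) ≤ 3/2 * d * Real.exp d := lemKa hcase.le
    have hKb : (1+d)*(Real.exp d - 1) ≤ 3/2 * d * (Real.exp d + 1) := lemKb hd
    have hes : 1 + (w-d) ≤ Real.exp (w-d) := by
      have := Real.add_one_le_exp (w-d); linarith
    have hW : Real.exp d * (1 + (w-d)) ≤ Real.exp w := by
      rw [hEw]
      exact mul_le_mul_of_nonneg_left hes hEd.le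
    have h1 : (w-d) * (2*(Real.exp d - 1)) ≤ (w-d) * (3/2 * d * Real.exp d) :=
      mul_le_mul_of_nonneg_left hKa hs
    have h2 : (3/2*d) * (Real.exp d * (1+(w-d))) ≤ (3/2*d) * Real.exp w :=
      mul_le_mul_of_nonneg_left hW (by linarith)
    nlinarith [h1, h2, hKb]

/-- monotonicity of x/(e^x - 1) -/
private lemma Bmono {a b : ℝ} (ha : 0 < a) (hab : a ≤ b) :
    b/(Real.exp b - 1) ≤ a/(Real.exp a - 1) := by
  have hb : 0 < b := lt_of_lt_of_le ha hab
  rw [div_le_div_iff₀ (expm1_pos' hb) (expm1_pos' ha)]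
  have hE : Real.exp b = Real.exp a * Real.exp (b-a) := by
    rw [← Real.exp_add]; congr 1; ring
  have h1 : 0 ≤ a * Real.exp a - (Real.exp a - 1) := by
    have := exp_inv_bound (t := a); nlinarith
  have h2 : 0 ≤ Real.exp (b-a) - 1 := by
    have := Real.add_one_le_exp (b-a); linarith
  have h3 : 0 ≤ Real.exp a - 1 := by
    have := Real.add_one_le_exp a; linarith
  have h4 : 0 ≤ Real.exp (b-a) - 1 - (b-a) := by
    have := Real.add_one_le_exp (b-a); linarith
  have p1 : 0 ≤ (a * Real.exp a - (Real.exp a - 1)) * (Real.exp (b-a) - 1) :=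
    mul_nonneg h1 h2
  have p2 : 0 ≤ (Real.exp a - 1) * (Real.exp (b-a) - 1 - (b-a)) :=
    mul_nonneg h3 h4
  rw [hE]
  nlinarith [p1, p2]

/-- monotonicity of log(1 - e^{-x}) -/
private lemma Lmono {a b : ℝ} (ha : 0 < a) (hab : a ≤ b) :
    Real.log (1 - Real.exp (-a)) ≤ Real.log (1 - Real.exp (-b)) := by
  have h1 : Real.exp (-a) < 1 := by
    calc Real.exp (-a) < Real.exp 0 := Real.exp_lt_exp.mpr (by linarith)
      _ = 1 := Real.exp_zero
  have h2 : Real.exp (-b) ≤ Real.exp (-a) := Real.exp_le_exp.mpr (by linarith)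
  have hpa : 0 < 1 - Real.exp (-a) := by linarith
  exact Real.log_le_log hpa (by linarith)

/-- difference bound for the log term -/
private lemma Ldiff {a b : ℝ} (ha : 0 < a) (hab : a ≤ b) :
    Real.log (1 - Real.exp (-b)) - Real.log (1 - Real.exp (-a)) ≤
      (b - a)/(Real.exp a - 1) := by
  have hb : 0 < b := lt_of_lt_of_le ha hab
  have h1a : Real.exp (-a) < 1 := by
    calc Real.exp (-a) < Real.exp 0 := Real.exp_lt_exp.mpr (by linarith)
      _ = 1 := Real.exp_zero
  have h1b : Real.exp (-b) < 1 := by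
    calc Real.exp (-b) < Real.exp 0 := Real.exp_lt_exp.mpr (by linarith)
      _ = 1 := Real.exp_zero
  have hA : 0 < 1 - Real.exp (-a) := by linarith
  have hB : 0 < 1 - Real.exp (-b) := by linarith
  have hEa := expm1_pos' ha
  have hlog : Real.log (1 - Real.exp (-b)) - Real.log (1 - Real.exp (-a)) ≤
      ((1 - Real.exp (-b)) - (1 - Real.exp (-a)))/(1 - Real.exp (-a)) := by
    rw [← Real.log_div hB.ne' hA.ne']
    have h := Real.log_le_sub_one_of_pos (div_pos hB hA)
    have heq : (1 - Real.exp (-b))/(1 - Real.exp (-a)) - 1 =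
        ((1 - Real.exp (-b)) - (1 - Real.exp (-a)))/(1 - Real.exp (-a)) := by
      field_simp
    linarith [heq ▸ h]
  refine le_trans hlog ?_
  rw [div_le_div_iff₀ hA hEa]
  have hfac : Real.exp (-b) = Real.exp (-a) * Real.exp (-(b-a)) := by
    rw [← Real.exp_add]; congr 1; ring
  have h2 : 1 - Real.exp (-(b-a)) ≤ b - a := by
    have := Real.add_one_le_exp (-(b-a)); linarith
  have h3 : Real.exp (-a) * Real.exp a = 1 := by rw [← Real.exp_add]; simp
  have h4 : 0 ≤ 1 - Real.exp (-(b-a)) := by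
    have : Real.exp (-(b-a)) ≤ Real.exp 0 := Real.exp_le_exp.mpr (by linarith)
    simpa using this
  -- (e^{-a} - e^{-b})(e^a - 1) = (1 - e^{-(b-a)})(1 - e^{-a}) ≤ (b-a)(1 - e^{-a})
  nlinarith [mul_le_mul_of_nonneg_right h2 hA.le, mul_nonneg h4 hA.le]

/-- difference bound for the Bose term -/
private lemma Bdiff {a b : ℝ} (ha : 0 < a) (hab : a ≤ b) :
    a/(Real.exp a - 1) - b/(Real.exp b - 1) ≤
      (1+a)*(Real.exp (b-a) - 1)/(Real.exp b - 1) := by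
  have hb : 0 < b := lt_of_lt_of_le ha hab
  have hEa := expm1_pos' ha
  have hEb := expm1_pos' hb
  rw [div_sub_div _ _ hEa.ne' hEb.ne', div_le_div_iff₀ (mul_pos hEa hEb) hEb]
  have hE : Real.exp b = Real.exp a * Real.exp (b-a) := by
    rw [← Real.exp_add]; congr 1; ring
  have hu : 1 + a ≤ Real.exp a := by have := Real.add_one_le_exp a; linarith
  have hv : 1 + (b-a) ≤ Real.exp (b-a) := by have := Real.add_one_le_exp (b-a); linarith
  have hd0 : (0:ℝ) ≤ b - a := by linarith
  have hnum : a*(Real.exp b - 1) - (Real.exp a - 1)*b ≤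
      (1+a)*(Real.exp a - 1)*(Real.exp (b-a) - 1) := by
    rw [hE]
    nlinarith [mul_nonneg (by nlinarith : (0:ℝ) ≤ Real.exp (b-a) - 1)
        (by nlinarith : (0:ℝ) ≤ Real.exp a - 1 - a),
      mul_nonneg hd0 (by nlinarith : (0:ℝ) ≤ Real.exp a - 1)]
  calc (a*(Real.exp b - 1) - (Real.exp a - 1)*b) * (Real.exp b - 1)
      ≤ ((1+a)*(Real.exp a - 1)*(Real.exp (b-a) - 1)) * (Real.exp b - 1) :=
        mul_le_mul_of_nonneg_right hnum hEb.le
    _ = ((1+a)*(Real.exp (b-a) - 1)) * ((Real.exp a - 1)*(Real.exp b - 1)) := by ring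

/-- the dimensionless per-mode error bound -/
private lemma key0 {x y δ : ℝ} (hx : 0 < x) (hy : 0 < y) (herr : |x - y| ≤ δ)
    (hδ : δ ≤ x/2) :
    |(y/(Real.exp y - 1) - Real.log (1 - Real.exp (-y))) -
      (x/(Real.exp x - 1) - Real.log (1 - Real.exp (-x)))| ≤
      5/2 * δ / (Real.exp (x/2) - 1) := by
  have habs := abs_le.mp herr
  have hδ0 : 0 ≤ δ := le_trans (abs_nonneg _) herr
  have hw : 0 < x/2 := by linarith
  have hP : 0 < Real.exp (x/2) - 1 := expm1_pos' hw
  have hEx : 0 < Real.exp x - 1 := expm1_pos' hx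
  have hEy : 0 < Real.exp y - 1 := expm1_pos' hy
  have hQ : 0 < Real.exp (x/2) + 1 := by positivity
  have hfact : Real.exp x - 1 = (Real.exp (x/2) - 1) * (Real.exp (x/2) + 1) := by
    rw [exp_half_sq x]; ring
  have hyw : x/2 ≤ y := by linarith [habs.2]
  have hwx : Real.exp (x/2) - 1 ≤ Real.exp y - 1 := by
    have := Real.exp_le_exp.mpr hyw; linarith
  have hRHS0 : 0 ≤ 5/2 * δ / (Real.exp (x/2) - 1) := by positivity
  have hsum : 3/2*δ/(Real.exp (x/2) - 1) + δ/(Real.exp (x/2) - 1) =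
      5/2*δ/(Real.exp (x/2) - 1) := by ring
  rw [abs_sub_le_iff]
  constructor
  · rcases le_total x y with hxy | hyx
    · have hB := Bmono hx hxy
      have hL := Lmono hx hxy
      linarith
    · -- decrease case y ≤ x
      have hd0 : (0:ℝ) ≤ x - y := by linarith
      have hdδ : x - y ≤ δ := habs.2
      have hdw : x - y ≤ x/2 := le_trans hdδ hδ
      have hB := Bdiff hy hyx
      have hK := lemK (d := x - y) (w := x/2) hd0 hdw
      have hK' : (1 + y) * (Real.exp (x-y) - 1) ≤ 3/2*δ*(Real.exp (x/2) + 1) := by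
        have h1 : (1 + y) * (Real.exp (x-y) - 1) ≤ 3/2*(x-y)*(Real.exp (x/2) + 1) := by
          calc (1 + y) * (Real.exp (x-y) - 1)
              = (1 + 2*(x/2) - (x-y)) * (Real.exp (x-y) - 1) := by ring
            _ ≤ 3/2*(x-y)*(Real.exp (x/2) + 1) := hK
        have h2 : 3/2*(x-y)*(Real.exp (x/2) + 1) ≤ 3/2*δ*(Real.exp (x/2) + 1) := by
          have := mul_le_mul_of_nonneg_right hdδ hQ.le
          nlinarith
        linarith
      have hBbd : (1+y)*(Real.exp (x-y) - 1)/(Real.exp x - 1) ≤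
          3/2*δ/(Real.exp (x/2) - 1) := by
        rw [hfact, div_le_div_iff₀ (mul_pos hP hQ) hP]
        calc (1+y)*(Real.exp (x-y) - 1) * (Real.exp (x/2) - 1)
            ≤ (3/2*δ*(Real.exp (x/2) + 1)) * (Real.exp (x/2) - 1) :=
              mul_le_mul_of_nonneg_right hK' hP.le
          _ = 3/2*δ*((Real.exp (x/2) - 1) * (Real.exp (x/2) + 1)) := by ring
      have hLd := Ldiff hy hyx
      have hLbd : (x - y)/(Real.exp y - 1) ≤ δ/(Real.exp (x/2) - 1) :=
        div_le_div₀ hδ0 hdδ hP hwx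
      linarith
  · rcases le_total x y with hxy | hyx
    · -- increase case x ≤ y
      have hd0 : (0:ℝ) ≤ y - x := by linarith
      have hdδ : y - x ≤ δ := by linarith [habs.1]
      have hB := Bdiff hx hxy
      have hB2 : (1+x)*(Real.exp (y-x) - 1)/(Real.exp y - 1) ≤
          (1+x)*(y-x)/(Real.exp x - 1) := by
        rw [div_le_div_iff₀ hEy hEx]
        have hde : Real.exp (y-x) * Real.exp x = Real.exp y := by
          rw [← Real.exp_add]; congr 1; ring
        have h1 : Real.exp (y-x) - 1 ≤ (y-x)*Real.exp (y-x) := by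
          have := exp_inv_bound (t := y - x); nlinarith [Real.exp_pos (y-x)]
        have h4 : 1 ≤ Real.exp (y-x) := by
          have := Real.add_one_le_exp (y-x); linarith
        have h5 : (0:ℝ) ≤ 1 + x := by linarith
        have hstep1 : (Real.exp (y-x) - 1)*(Real.exp x - 1) ≤
            (y-x)*(Real.exp y - 1) := by
          have q1 : (Real.exp (y-x) - 1)*(Real.exp x - 1) ≤
              ((y-x)*Real.exp (y-x))*(Real.exp x - 1) :=
            mul_le_mul_of_nonneg_right h1 hEx.le
          have q2 : ((y-x)*Real.exp (y-x))*(Real.exp x - 1) =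
              (y-x)*(Real.exp y - Real.exp (y-x)) := by
            rw [← hde]; ring
          have q3 : (y-x)*(Real.exp y - Real.exp (y-x)) ≤ (y-x)*(Real.exp y - 1) := by
            apply mul_le_mul_of_nonneg_left _ hd0
            linarith
          linarith [q2 ▸ q1]
        calc (1+x)*(Real.exp (y-x) - 1)*(Real.exp x - 1)
            = (1+x)*((Real.exp (y-x) - 1)*(Real.exp x - 1)) := by ring
          _ ≤ (1+x)*((y-x)*(Real.exp y - 1)) :=
              mul_le_mul_of_nonneg_left hstep1 h5
          _ = (1+x)*(y-x)*(Real.exp y - 1) := by ring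
      have hK2 := lemK2 hw.le
      have hBbd : (1+x)*(y-x)/(Real.exp x - 1) ≤ 3/2*δ/(Real.exp (x/2) - 1) := by
        rw [hfact, div_le_div_iff₀ (mul_pos hP hQ) hP]
        have h7 : 1 + x ≤ 3/2*(Real.exp (x/2) + 1) := by
          have : 1 + 2*(x/2) ≤ 3/2*(Real.exp (x/2) + 1) := hK2
          linarith
        have h6 : (1+x)*(y-x) ≤ (3/2*(Real.exp (x/2) + 1))*δ := by
          apply mul_le_mul h7 hdδ hd0 (by positivity)
        calc (1+x)*(y-x) * (Real.exp (x/2) - 1)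
            ≤ ((3/2*(Real.exp (x/2) + 1))*δ) * (Real.exp (x/2) - 1) :=
              mul_le_mul_of_nonneg_right h6 hP.le
          _ = 3/2*δ*((Real.exp (x/2) - 1) * (Real.exp (x/2) + 1)) := by ring
      have hLd := Ldiff hx hxy
      have hLbd : (y - x)/(Real.exp x - 1) ≤ δ/(Real.exp (x/2) - 1) := by
        apply div_le_div₀ hδ0 hdδ hP
        have := Real.exp_le_exp.mpr (by linarith : x/2 ≤ x)
        linarith
      linarith
    · have hB := Bmono hy hyx
      have hL := Lmono hy hyx
      linarith

/-- per-mode bound with temperature -/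
private lemma keyT {T x y ε : ℝ} (hT : 0 < T) (hx : 0 < x) (hy : 0 < y)
    (herr : |x - y| ≤ ε) (hε : ε ≤ x/2) :
    |((y/T)/(Real.exp (y/T) - 1) - Real.log (1 - Real.exp (-y/T))) -
      ((x/T)/(Real.exp (x/T) - 1) - Real.log (1 - Real.exp (-x/T)))| ≤
      5/2 * ε / (T * (Real.exp (x/(2*T)) - 1)) := by
  have hx' : 0 < x/T := div_pos hx hT
  have hy' : 0 < y/T := div_pos hy hT
  have herr' : |x/T - y/T| ≤ ε/T := by
    rw [div_sub_div_same, abs_div, abs_of_pos hT]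
    exact (div_le_div_iff_of_pos_right hT).mpr herr
  have hε' : ε/T ≤ (x/T)/2 := by
    have h1 : ε/T ≤ (x/2)/T := (div_le_div_iff_of_pos_right hT).mpr hε
    calc ε/T ≤ (x/2)/T := h1
      _ = (x/T)/2 := by ring
  have h := key0 hx' hy' herr' hε'
  rw [show -y/T = -(y/T) by ring, show -x/T = -(x/T) by ring,
    show x/(2*T) = (x/T)/2 by ring]
  calc |((y/T)/(Real.exp (y/T) - 1) - Real.log (1 - Real.exp (-(y/T)))) -
      ((x/T)/(Real.exp (x/T) - 1) - Real.log (1 - Real.exp (-(x/T))))|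
      ≤ 5/2 * (ε/T) / (Real.exp ((x/T)/2) - 1) := h
    _ = (5/2 * ε) / T / (Real.exp ((x/T)/2) - 1) := by ring
    _ = 5/2 * ε / (T * (Real.exp ((x/T)/2) - 1)) := by rw [div_div]

/-- Total error propagation for the vibrational entropy. -/
theorem vibrational_entropy_error (N : ℕ) (T kB ε' : ℝ) (hT : 0 < T) (hkB : 0 < kB)
    (θ θt : Fin N → ℝ) (hθ : ∀ i, 0 < θ i) (hθt : ∀ i, 0 < θt i)
    (herr : ∀ i, |θ i - θt i| ≤ ε') (hε : ∀ i, ε' ≤ θ i / 2) :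
    |(kB * ∑ i, ((θt i / T) / (Real.exp (θt i / T) - 1) -
          Real.log (1 - Real.exp (-(θt i) / T)))) -
        (kB * ∑ i, ((θ i / T) / (Real.exp (θ i / T) - 1) -
          Real.log (1 - Real.exp (-(θ i) / T))))| ≤
      kB * ∑ i, (5 / 2) * ε' / (T * (Real.exp (θ i / (2 * T)) - 1)) ∧
    kB * ∑ i, (5 / 2) * ε' / (T * (Real.exp (θ i / (2 * T)) - 1)) =
      (5 * kB * ε' / (2 * T)) * ∑ i, (Real.exp (θ i / (2 * T)) - 1)⁻¹ := by
  constructor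
  · rw [← mul_sub, abs_mul, abs_of_pos hkB, ← Finset.sum_sub_distrib]
    apply mul_le_mul_of_nonneg_left _ hkB.le
    refine le_trans (Finset.abs_sum_le_sum_abs _ _) (Finset.sum_le_sum fun i _ => ?_)
    have h := keyT hT (hθ i) (hθt i) (herr i) (hε i)
    calc |((θt i / T) / (Real.exp (θt i / T) - 1) -
          Real.log (1 - Real.exp (-(θt i) / T))) -
        ((θ i / T) / (Real.exp (θ i / T) - 1) -
          Real.log (1 - Real.exp (-(θ i) / T)))|
        ≤ 5/2 * ε' / (T * (Real.exp (θ i/(2*T)) - 1)) := h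
      _ = (5 / 2) * ε' / (T * (Real.exp (θ i / (2 * T)) - 1)) := by norm_num
  · rw [Finset.mul_sum, Finset.mul_sum]
    refine Finset.sum_congr rfl fun i _ => ?_
    have hpos : 0 < θ i/(2*T) := div_pos (hθ i) (by linarith)
    have hE : Real.exp (θ i/(2*T)) - 1 ≠ 0 := (expm1_pos' hpos).ne'
    field_simp
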